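/- arXiv:2604.08553 — 4 statements merged into one kernel-verified Lean document; each statement's English description precedes it below -/
import Mathlib

section
/- Under assumptions (i)–(iii), if p_L · p_G > 0, then the conditional probability that an agreed-upon prediction is correct satisfies P(Y* = Y_L | Y_L = Y_G) = (p_L · p_G) / (p_L · p_G + (1 − p_L)(1 − p_G)/(C − 1)). -/
open MeasureTheory

/-- Under assumptions (i)–(iii), if `p_L·p_G > 0`, then the conditional probability
that an agreed-upon prediction is correct satisfies
`P(Y* = Y_L | Y_L = Y_G) = p_L·p_G / (p_L·p_G + (1 − p_L)(1 − p_G)/(C − 1))`. -/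
theorem agreement_set_accuracy
    {Ω : Type*} [MeasurableSpace Ω] (P : Measure Ω) [IsProbabilityMeasure P]
    (C : ℕ) (hC : 2 ≤ C)
    (Ystar YL YG : Ω → Fin C)
    (hYstar : Measurable Ystar) (hYL : Measurable YL) (hYG : Measurable YG)
    (pL pG : ℝ)
    -- (i) class-independent accuracies
    (hiL : ∀ c : Fin C, P {ω | Ystar ω = c} ≠ 0 →
      (P {ω | YL ω = c ∧ Ystar ω = c}).toReal = pL * (P {ω | Ystar ω = c}).toReal)
    (hiG : ∀ c : Fin C, P {ω | Ystar ω = c} ≠ 0 →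
      (P {ω | YG ω = c ∧ Ystar ω = c}).toReal = pG * (P {ω | Ystar ω = c}).toReal)
    -- (ii) uniform error distribution
    (hiiL : ∀ c j : Fin C, j ≠ c → P {ω | Ystar ω = c} ≠ 0 →
      (P {ω | YL ω = j ∧ Ystar ω = c}).toReal
        = (1 - pL) / ((C : ℝ) - 1) * (P {ω | Ystar ω = c}).toReal)
    (hiiG : ∀ c j : Fin C, j ≠ c → P {ω | Ystar ω = c} ≠ 0 →
      (P {ω | YG ω = j ∧ Ystar ω = c}).toReal
        = (1 - pG) / ((C : ℝ) - 1) * (P {ω | Ystar ω = c}).toReal)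
    -- (iii) conditional independence of `YL` and `YG` given `Ystar`
    (hiii : ∀ a b c : Fin C,
      (P {ω | YL ω = a ∧ YG ω = b ∧ Ystar ω = c}).toReal * (P {ω | Ystar ω = c}).toReal
        = (P {ω | YL ω = a ∧ Ystar ω = c}).toReal
          * (P {ω | YG ω = b ∧ Ystar ω = c}).toReal)
    (hpos : 0 < pL * pG) :
    (ProbabilityTheory.cond P {ω | YL ω = YG ω} {ω | Ystar ω = YL ω}).toReal
      = pL * pG / (pL * pG + (1 - pL) * (1 - pG) / ((C : ℝ) - 1)) := by
  classical
  set s : Fin C → ℝ := fun c => (P {ω | Ystar ω = c}).toReal with hs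
  have hC1 : (0:ℝ) < (C:ℝ) - 1 := by
    have : (2:ℝ) ≤ (C:ℝ) := by exact_mod_cast hC
    linarith
  have hC1ne : ((C:ℝ) - 1) ≠ 0 := ne_of_gt hC1
  -- measurability helpers
  have mS : ∀ c : Fin C, MeasurableSet {ω | Ystar ω = c} :=
    fun c => hYstar (measurableSet_singleton c)
  have mL : ∀ a : Fin C, MeasurableSet {ω | YL ω = a} :=
    fun a => hYL (measurableSet_singleton a)
  have mG : ∀ b : Fin C, MeasurableSet {ω | YG ω = b} :=
    fun b => hYG (measurableSet_singleton b)
  have mT : ∀ a b c : Fin C, MeasurableSet {ω | YL ω = a ∧ YG ω = b ∧ Ystar ω = c} := by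
    intro a b c
    have : {ω | YL ω = a ∧ YG ω = b ∧ Ystar ω = c}
        = {ω | YL ω = a} ∩ ({ω | YG ω = b} ∩ {ω | Ystar ω = c}) := rfl
    rw [this]
    exact (mL a).inter ((mG b).inter (mS c))
  -- sum of class probabilities is 1
  have hsum1 : ∑ c, s c = 1 := by
    have hdisj : Pairwise (Function.onFun Disjoint fun c : Fin C => {ω | Ystar ω = c}) := by
      intro c d hcd
      simp only [Function.onFun, Set.disjoint_left, Set.mem_setOf_eq]
      intro ω h1 h2
      exact hcd (h1.symm.trans h2)
    have hU : (⋃ c : Fin C, {ω | Ystar ω = c}) = Set.univ := by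
      ext ω; simp
    have h := measure_iUnion (μ := P) hdisj mS
    rw [hU, measure_univ, tsum_fintype] at h
    have h2 := congrArg ENNReal.toReal h
    rw [ENNReal.toReal_sum (fun c _ => measure_ne_top P _)] at h2
    simpa [hs] using h2.symm
  -- conditional class probabilities
  set qL : Fin C → Fin C → ℝ :=
    fun a c => if a = c then pL else (1 - pL) / ((C:ℝ) - 1) with hqL
  set qG : Fin C → Fin C → ℝ :=
    fun b c => if b = c then pG else (1 - pG) / ((C:ℝ) - 1) with hqG
  have hL2 : ∀ a c : Fin C, P {ω | Ystar ω = c} ≠ 0 →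
      (P {ω | YL ω = a ∧ Ystar ω = c}).toReal = qL a c * s c := by
    intro a c hc
    by_cases h : a = c
    · subst h; simpa [hqL] using hiL a hc
    · simpa [hqL, h] using hiiL c a h hc
  have hG2 : ∀ b c : Fin C, P {ω | Ystar ω = c} ≠ 0 →
      (P {ω | YG ω = b ∧ Ystar ω = c}).toReal = qG b c * s c := by
    intro b c hc
    by_cases h : b = c
    · subst h; simpa [hqG] using hiG b hc
    · simpa [hqG, h] using hiiG c b h hc
  -- factorization of the joint probabilities
  have hfac : ∀ a b c : Fin C,
      (P {ω | YL ω = a ∧ YG ω = b ∧ Ystar ω = c}).toReal = qL a c * qG b c * s c := by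
    intro a b c
    by_cases hc : P {ω | Ystar ω = c} = 0
    · have hsub : {ω | YL ω = a ∧ YG ω = b ∧ Ystar ω = c} ⊆ {ω | Ystar ω = c} :=
        fun ω h => h.2.2
      have h0 : P {ω | YL ω = a ∧ YG ω = b ∧ Ystar ω = c} = 0 :=
        measure_mono_null hsub hc
      simp [h0, hs, hc]
    · have hsne : s c ≠ 0 := by
        simp only [hs, ENNReal.toReal_ne_zero]
        exact ⟨hc, measure_ne_top P _⟩
      have h3 := hiii a b c
      rw [hL2 a c hc, hG2 b c hc] at h3
      have h4 : (P {ω | YL ω = a ∧ YG ω = b ∧ Ystar ω = c}).toReal * s c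
          = (qL a c * qG b c * s c) * s c := by
        rw [h3]; ring
      exact mul_right_cancel₀ hsne h4
  -- positivity facts
  obtain ⟨c₀, hc₀⟩ : ∃ c : Fin C, s c ≠ 0 := by
    by_contra h
    push_neg at h
    rw [Finset.sum_eq_zero (fun c _ => h c)] at hsum1
    norm_num at hsum1
  have hc₀' : P {ω | Ystar ω = c₀} ≠ 0 := by
    intro h
    exact hc₀ (by simp [hs, h])
  have hsc₀pos : 0 < s c₀ := lt_of_le_of_ne ENNReal.toReal_nonneg (Ne.symm hc₀)
  obtain ⟨j₀, hj₀⟩ : ∃ j : Fin C, j ≠ c₀ := by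
    have : 1 < Fintype.card (Fin C) := by simp; omega
    exact Fintype.exists_ne_of_one_lt_card this c₀
  have h1pL : 0 ≤ 1 - pL := by
    have h1 : 0 ≤ (1 - pL) / ((C:ℝ) - 1) * s c₀ :=
      (hiiL c₀ j₀ hj₀ hc₀') ▸ ENNReal.toReal_nonneg
    have h2 : 0 ≤ (1 - pL) / ((C:ℝ) - 1) := by nlinarith [h1, hsc₀pos]
    calc (0:ℝ) ≤ (1 - pL) / ((C:ℝ) - 1) * ((C:ℝ) - 1) := mul_nonneg h2 hC1.le
      _ = 1 - pL := div_mul_cancel₀ _ hC1ne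
  have h1pG : 0 ≤ 1 - pG := by
    have h1 : 0 ≤ (1 - pG) / ((C:ℝ) - 1) * s c₀ :=
      (hiiG c₀ j₀ hj₀ hc₀') ▸ ENNReal.toReal_nonneg
    have h2 : 0 ≤ (1 - pG) / ((C:ℝ) - 1) := by nlinarith [h1, hsc₀pos]
    calc (0:ℝ) ≤ (1 - pG) / ((C:ℝ) - 1) * ((C:ℝ) - 1) := mul_nonneg h2 hC1.le
      _ = 1 - pG := div_mul_cancel₀ _ hC1ne
  have hDpos : 0 < pL * pG + (1 - pL) * (1 - pG) / ((C:ℝ) - 1) := by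
    have : 0 ≤ (1 - pL) * (1 - pG) / ((C:ℝ) - 1) :=
      div_nonneg (mul_nonneg h1pL h1pG) hC1.le
    linarith
  -- inner sum over classes
  have hinner : ∀ c : Fin C, ∑ a, qL a c * qG a c
      = pL * pG + (1 - pL) * (1 - pG) / ((C:ℝ) - 1) := by
    intro c
    rw [← Finset.add_sum_erase Finset.univ (fun a => qL a c * qG a c) (Finset.mem_univ c)]
    have h1 : qL c c * qG c c = pL * pG := by simp [hqL, hqG]
    have h2 : ∑ a ∈ Finset.univ.erase c, qL a c * qG a c
        = ((C:ℝ) - 1) * ((1 - pL) / ((C:ℝ) - 1) * ((1 - pG) / ((C:ℝ) - 1))) := by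
      have heach : ∀ a ∈ Finset.univ.erase c,
          qL a c * qG a c = (1 - pL) / ((C:ℝ) - 1) * ((1 - pG) / ((C:ℝ) - 1)) := by
        intro a ha
        have hac : a ≠ c := Finset.ne_of_mem_erase ha
        simp [hqL, hqG, hac]
      rw [Finset.sum_congr rfl heach, Finset.sum_const, nsmul_eq_mul]
      congr 1
      rw [Finset.card_erase_of_mem (Finset.mem_univ c), Finset.card_univ, Fintype.card_fin]
      rw [Nat.cast_sub (by omega : 1 ≤ C)]
      norm_num
    rw [h1, h2]
    field_simp
  -- measurability of the agreement set
  have hAU : {ω | YL ω = YG ω}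
      = ⋃ p : Fin C × Fin C, {ω | YL ω = p.1 ∧ YG ω = p.1 ∧ Ystar ω = p.2} := by
    ext ω
    simp only [Set.mem_iUnion, Set.mem_setOf_eq]
    constructor
    · intro h; exact ⟨(YL ω, Ystar ω), rfl, h.symm, rfl⟩
    · rintro ⟨p, h1, h2, -⟩; rw [h1, h2]
  have hdisjA : Pairwise (Function.onFun Disjoint
      fun p : Fin C × Fin C => {ω | YL ω = p.1 ∧ YG ω = p.1 ∧ Ystar ω = p.2}) := by
    intro p q hpq
    simp only [Function.onFun, Set.disjoint_left, Set.mem_setOf_eq]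
    rintro ω ⟨h1, -, h3⟩ ⟨h4, -, h6⟩
    exact hpq (Prod.ext (h1.symm.trans h4) (h3.symm.trans h6))
  have mA : MeasurableSet {ω | YL ω = YG ω} := by
    rw [hAU]; exact MeasurableSet.iUnion fun p => mT p.1 p.1 p.2
  -- probability of the agreement set
  have hPA : (P {ω | YL ω = YG ω}).toReal
      = pL * pG + (1 - pL) * (1 - pG) / ((C:ℝ) - 1) := by
    have h := measure_iUnion (μ := P) hdisjA (fun p => mT p.1 p.1 p.2)
    rw [← hAU, tsum_fintype] at h
    have h2 := congrArg ENNReal.toReal h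
    rw [ENNReal.toReal_sum (fun p _ => measure_ne_top P _)] at h2
    rw [h2]
    have h3 : ∀ p : Fin C × Fin C,
        (P {ω | YL ω = p.1 ∧ YG ω = p.1 ∧ Ystar ω = p.2}).toReal
          = qL p.1 p.2 * qG p.1 p.2 * s p.2 := fun p => hfac p.1 p.1 p.2
    rw [Finset.sum_congr rfl (fun p _ => h3 p)]
    rw [Fintype.sum_prod_type, Finset.sum_comm]
    have h4 : ∀ c : Fin C, ∑ a, qL a c * qG a c * s c
        = (pL * pG + (1 - pL) * (1 - pG) / ((C:ℝ) - 1)) * s c := by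
      intro c
      rw [← Finset.sum_mul, hinner c]
    rw [Finset.sum_congr rfl (fun c _ => h4 c), ← Finset.mul_sum, hsum1, mul_one]
  -- probability of agreement ∩ correctness
  have hABU : {ω | YL ω = YG ω} ∩ {ω | Ystar ω = YL ω}
      = ⋃ c : Fin C, {ω | YL ω = c ∧ YG ω = c ∧ Ystar ω = c} := by
    ext ω
    simp only [Set.mem_inter_iff, Set.mem_setOf_eq, Set.mem_iUnion]
    constructor
    · rintro ⟨h1, h2⟩; exact ⟨YL ω, rfl, h1.symm, h2⟩
    · rintro ⟨c, h1, h2, h3⟩; exact ⟨h1.trans h2.symm, h3.trans h1.symm⟩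
  have hdisjAB : Pairwise (Function.onFun Disjoint
      fun c : Fin C => {ω | YL ω = c ∧ YG ω = c ∧ Ystar ω = c}) := by
    intro c d hcd
    simp only [Function.onFun, Set.disjoint_left, Set.mem_setOf_eq]
    rintro ω ⟨h1, -, -⟩ ⟨h4, -, -⟩
    exact hcd (h1.symm.trans h4)
  have hPAB : (P ({ω | YL ω = YG ω} ∩ {ω | Ystar ω = YL ω})).toReal = pL * pG := by
    have h := measure_iUnion (μ := P) hdisjAB (fun c => mT c c c)
    rw [← hABU, tsum_fintype] at h
    have h2 := congrArg ENNReal.toReal h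
    rw [ENNReal.toReal_sum (fun c _ => measure_ne_top P _)] at h2
    rw [h2]
    have h3 : ∀ c : Fin C, (P {ω | YL ω = c ∧ YG ω = c ∧ Ystar ω = c}).toReal
        = pL * pG * s c := by
      intro c
      rw [hfac c c c]
      simp [hqL, hqG]
    rw [Finset.sum_congr rfl (fun c _ => h3 c), ← Finset.mul_sum, hsum1, mul_one]
  -- conclusion
  rw [ProbabilityTheory.cond_apply mA, ENNReal.toReal_mul, ENNReal.toReal_inv,
    hPA, hPAB, inv_mul_eq_div]
end

section
/- Let C ≥ 2 be an integer and let a, b be real numbers with 1/C < a < 1 and 1/C < b < 1. Then (a · b) / (a · b + (1 − a)(1 − b)/(C − 1)) > max(a, b). -/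
/-- If `C ≥ 2` and `1/C < a < 1`, `1/C < b < 1`, then the agreement-set accuracy
`(a·b)/(a·b + (1−a)(1−b)/(C−1))` strictly exceeds `max a b`. -/
theorem agreement_bound_exceeds_max (C : ℕ) (hC : 2 ≤ C) (a b : ℝ)
    (ha1 : 1 / (C : ℝ) < a) (ha2 : a < 1)
    (hb1 : 1 / (C : ℝ) < b) (hb2 : b < 1) :
    (a * b) / (a * b + (1 - a) * (1 - b) / ((C : ℝ) - 1)) > max a b := by
  have hC2 : (2 : ℝ) ≤ (C : ℝ) := by exact_mod_cast hC
  have hCpos : (0 : ℝ) < (C : ℝ) := by linarith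
  have hD : (0 : ℝ) < (C : ℝ) - 1 := by linarith
  have ha0 : 0 < a := lt_trans (by positivity) ha1
  have hb0 : 0 < b := lt_trans (by positivity) hb1
  have haC : 1 < a * (C : ℝ) := by rwa [div_lt_iff₀ hCpos] at ha1
  have hbC : 1 < b * (C : ℝ) := by rwa [div_lt_iff₀ hCpos] at hb1
  have h1a : 0 < 1 - a := by linarith
  have h1b : 0 < 1 - b := by linarith
  have hd : 0 < a * b + (1 - a) * (1 - b) / ((C : ℝ) - 1) := by positivity
  -- d < b and d < a
  have hdb : a * b + (1 - a) * (1 - b) / ((C : ℝ) - 1) < b := by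
    have h : (1 - a) * (1 - b) / ((C : ℝ) - 1) < b - a * b := by
      rw [div_lt_iff₀ hD]
      nlinarith [mul_pos h1a (by linarith : (0:ℝ) < b * (C : ℝ) - 1)]
    linarith
  have hda : a * b + (1 - a) * (1 - b) / ((C : ℝ) - 1) < a := by
    have h : (1 - a) * (1 - b) / ((C : ℝ) - 1) < a - a * b := by
      rw [div_lt_iff₀ hD]
      nlinarith [mul_pos h1b (by linarith : (0:ℝ) < a * (C : ℝ) - 1)]
    linarith
  rw [gt_iff_lt]
  apply max_lt
  · rw [lt_div_iff₀ hd]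
    exact mul_lt_mul_of_pos_left hdb ha0
  · rw [lt_div_iff₀ hd]
    nlinarith [mul_lt_mul_of_pos_left hda hb0]
end

section
/- Under assumptions (i)–(iii), if additionally 1/C < p_L < 1 and 1/C < p_G < 1, then the accuracy of the agreement set strictly exceeds both individual accuracies: P(Y* = Y_L | Y_L = Y_G) > max(p_L, p_G). -/
open MeasureTheory

/-! Given the true class `c`, conditional independence makes the two models agree on `c` with
probability `pL pG` and on each of the `C - 1` wrong labels with probability
`(1 - pL)(1 - pG) / (C - 1)²`. Summing over classes, the agreement set has probability
`pL pG + (1 - pL)(1 - pG) / (C - 1)`, of which `pL pG` is correct. This ratio exceeds `pL`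
iff `(1 - pG) / (C - 1) < pG`, i.e. `1 < C pG`, and symmetrically it exceeds `pG`. -/

lemma lt_mul_div_agreement {C pL pG : ℝ} (hC : 1 < C) (hpL : 0 < pL) (hpL1 : pL < 1)
    (hpG : 1 / C < pG) (hpG1 : pG < 1) :
    pL < pL * pG / (pL * pG + (1 - pL) * (1 - pG) / (C - 1)) := by
  have hC1 : 0 < C - 1 := sub_pos.mpr hC
  have hpG0 : 0 < pG := lt_trans (by positivity) hpG
  have herr : (1 - pG) / (C - 1) < pG := by
    rw [div_lt_iff₀ (by positivity)] at hpG
    rw [div_lt_iff₀ hC1]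
    linarith
  have hden : 0 < pL * pG + (1 - pL) * (1 - pG) / (C - 1) := by
    have : 0 ≤ (1 - pL) * (1 - pG) / (C - 1) := by
      apply div_nonneg _ hC1.le; nlinarith
    positivity
  rw [lt_div_iff₀ hden]
  calc pL * (pL * pG + (1 - pL) * (1 - pG) / (C - 1))
      = pL * (pL * pG + (1 - pL) * ((1 - pG) / (C - 1))) := by ring
    _ < pL * (pL * pG + (1 - pL) * pG) := by gcongr
    _ = pL * pG := by ring

lemma max_lt_mul_div_agreement {C pL pG : ℝ} (hC : 1 < C) (hpL : 1 / C < pL) (hpL1 : pL < 1)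
    (hpG : 1 / C < pG) (hpG1 : pG < 1) :
    max pL pG < pL * pG / (pL * pG + (1 - pL) * (1 - pG) / (C - 1)) := by
  have hpos : ∀ p, 1 / C < p → 0 < p := fun p hp => lt_trans (by positivity) hp
  refine max_lt (lt_mul_div_agreement hC (hpos pL hpL) hpL1 hpG hpG1) ?_
  rw [mul_comm pL, mul_comm (1 - pL)]
  exact lt_mul_div_agreement hC (hpos pG hpG) hpG1 hpL hpL1

lemma sum_ite_eq_add_card_sub_one_mul {α : Type*} [Fintype α] [DecidableEq α] (c : α)
    (a b : ℝ) :
    ∑ j, (if j = c then a else b) = a + (Fintype.card α - 1) * b := by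
  rw [Fintype.sum_eq_add_sum_compl c, if_pos rfl,
    Finset.sum_congr rfl fun j hj => if_neg (Finset.mem_compl.mp hj ∘ Finset.mem_singleton.mpr),
    Finset.sum_const, Finset.card_compl, Finset.card_singleton, nsmul_eq_mul,
    Nat.cast_sub (Fintype.card_pos_iff.mpr ⟨c⟩), Nat.cast_one]

section Probability

variable {Ω : Type*} [MeasurableSpace Ω] (P : Measure Ω) [IsFiniteMeasure P]

lemma measureReal_inter_inter_eq_mul_mul_of_condIndep {A B S : Set Ω} {r s : ℝ}
    (hAB : P.real (A ∩ (B ∩ S)) * P.real S = P.real (A ∩ S) * P.real (B ∩ S))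
    (hA : P S ≠ 0 → P.real (A ∩ S) = r * P.real S)
    (hB : P S ≠ 0 → P.real (B ∩ S) = s * P.real S) :
    P.real (A ∩ (B ∩ S)) = r * s * P.real S := by
  by_cases hS : P S = 0
  · have hABS : P (A ∩ (B ∩ S)) = 0 := measure_mono_null (fun ω h => h.2.2) hS
    simp [measureReal_def, hABS, hS]
  · refine mul_right_cancel₀ ((measureReal_ne_zero_iff ..).mpr hS) ?_
    rw [hAB, hA hS, hB hS]
    ring

variable {α : Type*} [Fintype α] [MeasurableSpace α] [MeasurableSingletonClass α]

lemma measureReal_eq_sum_inter_fiber {X : Ω → α} (hX : Measurable X) (A : Set Ω) :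
    P.real A = ∑ a, P.real ({ω | X ω = a} ∩ A) := by
  rw [← measureReal_restrict_apply_univ, ← Set.preimage_univ (f := X), ← Finset.coe_univ,
    ← sum_measureReal_preimage_singleton _ fun a _ => hX (measurableSet_singleton a)]
  exact Finset.sum_congr rfl fun a _ =>
    measureReal_restrict_apply (hX (measurableSet_singleton a))

variable {Y Y₁ Y₂ : Ω → α}

lemma measureReal_setOf_eq_eq_sum_sum (hY : Measurable Y) (hY₁ : Measurable Y₁) :
    P.real {ω | Y₁ ω = Y₂ ω}
      = ∑ c, ∑ j, P.real {ω | Y₁ ω = j ∧ Y₂ ω = j ∧ Y ω = c} := by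
  rw [measureReal_eq_sum_inter_fiber P hY]
  refine Finset.sum_congr rfl fun c _ => ?_
  rw [measureReal_eq_sum_inter_fiber P hY₁]
  refine Finset.sum_congr rfl fun j _ => congrArg P.real ?_
  ext ω
  simp only [Set.mem_inter_iff, Set.mem_ofPred_eq]
  grind

lemma measureReal_setOf_eq_inter_setOf_eq_eq_sum (hY : Measurable Y) :
    P.real ({ω | Y₁ ω = Y₂ ω} ∩ {ω | Y ω = Y₁ ω})
      = ∑ c, P.real {ω | Y₁ ω = c ∧ Y₂ ω = c ∧ Y ω = c} := by
  rw [measureReal_eq_sum_inter_fiber P hY]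
  refine Finset.sum_congr rfl fun c _ => congrArg P.real ?_
  ext ω
  simp only [Set.mem_inter_iff, Set.mem_ofPred_eq]
  grind

end Probability

/-- Under assumptions (i)–(iii), if additionally `1/C < p_L < 1` and `1/C < p_G < 1`,
then the accuracy of the agreement set strictly exceeds both individual accuracies:
`P(Y* = Y_L | Y_L = Y_G) > max p_L p_G`. -/
theorem agreement_set_accuracy_exceeds_individual
    {Ω : Type*} [MeasurableSpace Ω] (P : Measure Ω) [IsProbabilityMeasure P]
    (C : ℕ) (hC : 2 ≤ C)
    (Ystar YL YG : Ω → Fin C)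
    (hYstar : Measurable Ystar) (hYL : Measurable YL) (hYG : Measurable YG)
    (pL pG : ℝ)
    -- (i) class-independent accuracies
    (hiL : ∀ c : Fin C, P {ω | Ystar ω = c} ≠ 0 →
      (P {ω | YL ω = c ∧ Ystar ω = c}).toReal = pL * (P {ω | Ystar ω = c}).toReal)
    (hiG : ∀ c : Fin C, P {ω | Ystar ω = c} ≠ 0 →
      (P {ω | YG ω = c ∧ Ystar ω = c}).toReal = pG * (P {ω | Ystar ω = c}).toReal)
    -- (ii) uniform error distribution
    (hiiL : ∀ c j : Fin C, j ≠ c → P {ω | Ystar ω = c} ≠ 0 →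
      (P {ω | YL ω = j ∧ Ystar ω = c}).toReal
        = (1 - pL) / ((C : ℝ) - 1) * (P {ω | Ystar ω = c}).toReal)
    (hiiG : ∀ c j : Fin C, j ≠ c → P {ω | Ystar ω = c} ≠ 0 →
      (P {ω | YG ω = j ∧ Ystar ω = c}).toReal
        = (1 - pG) / ((C : ℝ) - 1) * (P {ω | Ystar ω = c}).toReal)
    -- (iii) conditional independence of `YL` and `YG` given `Ystar`
    (hiii : ∀ a b c : Fin C,
      (P {ω | YL ω = a ∧ YG ω = b ∧ Ystar ω = c}).toReal * (P {ω | Ystar ω = c}).toReal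
        = (P {ω | YL ω = a ∧ Ystar ω = c}).toReal
          * (P {ω | YG ω = b ∧ Ystar ω = c}).toReal)
    (hpL1 : 1 / (C : ℝ) < pL) (hpL2 : pL < 1)
    (hpG1 : 1 / (C : ℝ) < pG) (hpG2 : pG < 1) :
    (ProbabilityTheory.cond P {ω | YL ω = YG ω} {ω | Ystar ω = YL ω}).toReal
      > max pL pG := by
  have hC1 : (1 : ℝ) < C := by exact_mod_cast hC
  have hclass_sum : ∑ c, P.real {ω | Ystar ω = c} = 1 := by
    simpa using (measureReal_eq_sum_inter_fiber P hYstar Set.univ).symm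
  have hcell : ∀ j c, P.real {ω | YL ω = j ∧ YG ω = j ∧ Ystar ω = c}
      = (if j = c then pL * pG else (1 - pL) / (C - 1) * ((1 - pG) / (C - 1)))
          * P.real {ω | Ystar ω = c} := by
    intro j c
    split_ifs with hjc
    · subst hjc
      exact measureReal_inter_inter_eq_mul_mul_of_condIndep P (hiii j j j) (hiL j) (hiG j)
    · exact measureReal_inter_inter_eq_mul_mul_of_condIndep P (hiii j j c) (hiiL c j hjc)
        (hiiG c j hjc)
  have hcorrect : P.real ({ω | YL ω = YG ω} ∩ {ω | Ystar ω = YL ω}) = pL * pG := by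
    simp only [measureReal_setOf_eq_inter_setOf_eq_eq_sum P hYstar, hcell, if_pos,
      ← Finset.mul_sum, hclass_sum, mul_one]
  have hagree : P.real {ω | YL ω = YG ω} = pL * pG + (1 - pL) * (1 - pG) / (C - 1) := by
    simp only [measureReal_setOf_eq_eq_sum_sum P hYstar hYL, hcell, ← Finset.sum_mul,
      sum_ite_eq_add_card_sub_one_mul, Fintype.card_fin, ← Finset.mul_sum, hclass_sum, mul_one]
    field_simp [(sub_pos.mpr hC1).ne']
  rw [ProbabilityTheory.cond_apply (measurableSet_eq_fun hYL hYG), ENNReal.toReal_mul,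
    ENNReal.toReal_inv, ← measureReal_def, ← measureReal_def, hcorrect, hagree, inv_mul_eq_div]
  exact max_lt_mul_div_agreement hC1 hpL1 hpL2 hpG1 hpG2
end

section
/- Let u ≠ v be vertices with v reachable from u, let h* = dist(u, v), let S be the set of shortest paths from u to v, and for each shortest path p ∈ S let D^p_GM = (Π_{k=0}^{h*−1} deg(p_k))^{1/h*} be the geometric mean of the degrees of the first h* vertices of p (all vertices of p except the final endpoint v). Setting D*_GM = min_{p ∈ S} D^p_GM, the entry of the h*-th power of the row-normalized adjacency matrix satisfies (P^{h*})(u, v) ≤ |S| / (D*_GM)^{h*}. -/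
/-!
Expanding the matrix power, `(P ^ n) u v` is the sum over length-`n` walks `p` from `u` to `v`
of the product of `1 / deg` over the vertices that `p` leaves, i.e. of `1 / degreeProd p`.
For every such walk `degreeProd p` is the `n`-th power of its degree geometric mean, hence at
least `(D*_GM) ^ n`, so each of the `|S|` summands is at most `1 / (D*_GM) ^ n`.
-/

open Finset

namespace SimpleGraph

variable {V : Type*} [Fintype V] (G : SimpleGraph V) [DecidableRel G.Adj]

namespace Walk

variable {G} {u v w : V}

def degreeProd (p : G.Walk u v) : ℝ :=
  (p.support.dropLast.map fun x => (G.degree x : ℝ)).prod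

@[simp]
theorem degreeProd_nil : (nil : G.Walk u u).degreeProd = 1 := rfl

theorem degreeProd_cons (h : G.Adj u w) (p : G.Walk w v) :
    (cons h p).degreeProd = G.degree u * p.degreeProd := by
  rw [degreeProd, support_cons, List.dropLast_cons_of_ne_nil p.support_ne_nil, List.map_cons,
    List.prod_cons, degreeProd]

theorem one_le_degreeProd (p : G.Walk u v) : 1 ≤ p.degreeProd := by
  induction p with
  | nil => rfl
  | cons h p ih =>
    rw [degreeProd_cons]
    have hdeg : 1 ≤ G.degree _ := (G.degree_pos_iff_exists_adj _).mpr ⟨_, h⟩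
    exact one_le_mul_of_one_le_of_one_le (by exact_mod_cast hdeg) ih

theorem degreeProd_rpow_inv_length_pow (p : G.Walk u v) :
    (p.degreeProd ^ ((p.length : ℝ)⁻¹)) ^ p.length = p.degreeProd := by
  cases p with
  -- the exponent is the junk value `0⁻¹ = 0`, harmless since the empty product is `1`
  | nil => simp
  | cons h p =>
    exact Real.rpow_inv_natCast_pow (zero_le_one.trans (cons h p).one_le_degreeProd)
      (length_cons h p ▸ Nat.succ_ne_zero _)

theorem prod_darts_rowNormalized (P : Matrix V V ℝ)
    (hP : ∀ x y : V, P x y = if G.Adj x y then ((G.degree x : ℝ))⁻¹ else 0) (p : G.Walk u v) :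
    (p.darts.map fun d => P d.fst d.snd).prod = p.degreeProd⁻¹ := by
  induction p with
  | nil => simp
  | cons h p ih => rw [darts_cons, List.map_cons, List.prod_cons, ih, degreeProd_cons, mul_inv,
      hP, if_pos h]

end Walk

variable [DecidableEq V]

theorem matrix_pow_apply_eq_sum_walk_prod {R : Type*} [CommSemiring R] (M : Matrix V V R)
    (hM : ∀ x y, ¬G.Adj x y → M x y = 0) (n : ℕ) (x y : V) :
    (M ^ n) x y = ∑ p ∈ G.finsetWalkLength n x y, (p.darts.map fun d => M d.fst d.snd).prod := by
  induction n generalizing x with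
  | zero => obtain rfl | h := eq_or_ne x y <;> simp [finsetWalkLength, *]
  | succ n ih =>
    have hnbr : ∑ z, M x z * (M ^ n) z y = ∑ w : G.neighborSet x, M x w * (M ^ n) w y := by
      rw [← sum_subtype (G.neighborFinset x) (fun _ => Set.mem_toFinset)
        fun z => M x z * (M ^ n) z y]
      exact (sum_subset (subset_univ _) fun z _ hz => by
        rw [hM x z (by simpa using hz), zero_mul]).symm
    rw [pow_succ', Matrix.mul_apply, hnbr, finsetWalkLength, sum_biUnion]
    · refine sum_congr rfl fun w _ => ?_
      rw [sum_map, ih, mul_sum]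
      rfl
    · rintro a - b - hab
      refine Finset.disjoint_left.mpr fun p hpa hpb => hab ?_
      obtain ⟨pa, -, rfl⟩ := mem_map.mp hpa
      obtain ⟨pb, -, h⟩ := mem_map.mp hpb
      exact Subtype.ext (Walk.cons.inj h).1.symm

theorem rowNormalized_pow_apply_le (P : Matrix V V ℝ)
    (hP : ∀ x y : V, P x y = if G.Adj x y then ((G.degree x : ℝ))⁻¹ else 0) (n : ℕ) (u v : V) :
    (P ^ n) u v ≤ (#(G.finsetWalkLength n u v) : ℝ) /
      sInf ((fun p : G.Walk u v => p.degreeProd ^ ((n : ℝ)⁻¹)) '' {p | p.length = n}) ^ n := by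
  set c := sInf ((fun p : G.Walk u v => p.degreeProd ^ ((n : ℝ)⁻¹)) '' {p | p.length = n})
  have hlower : 1 ∈ lowerBounds
      ((fun p : G.Walk u v => p.degreeProd ^ ((n : ℝ)⁻¹)) '' {p | p.length = n}) := by
    rintro _ ⟨q, -, rfl⟩
    exact Real.one_le_rpow q.one_le_degreeProd (by positivity)
  rw [G.matrix_pow_apply_eq_sum_walk_prod P (fun x y h => by rw [hP, if_neg h]), div_eq_mul_inv,
    ← nsmul_eq_mul]
  refine sum_le_card_nsmul _ _ _ fun p hp => ?_
  rw [mem_finsetWalkLength_iff] at hp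
  have hc : 1 ≤ c := le_csInf ⟨_, p, hp, rfl⟩ hlower
  have hcp : c ≤ p.degreeProd ^ ((n : ℝ)⁻¹) := csInf_le ⟨1, hlower⟩ ⟨p, hp, rfl⟩
  rw [Walk.prod_darts_rowNormalized P hP]
  refine inv_anti₀ (pow_pos (zero_lt_one.trans_le hc) n) ?_
  calc c ^ n ≤ (p.degreeProd ^ ((n : ℝ)⁻¹)) ^ n := pow_le_pow_left₀ (zero_le_one.trans hc) hcp n
    _ = p.degreeProd := hp ▸ p.degreeProd_rpow_inv_length_pow

end SimpleGraph

theorem rowNormalized_pow_dist_entry_le_general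
    {V : Type*} [Fintype V] [DecidableEq V]
    (G : SimpleGraph V) [DecidableRel G.Adj]
    (P : Matrix V V ℝ)
    (hP : ∀ x y : V, P x y = if G.Adj x y then ((G.degree x : ℝ))⁻¹ else 0)
    (u v : V) :
    (P ^ G.dist u v) u v
      ≤ ((G.finsetWalkLength (G.dist u v) u v).card : ℝ)
          / (sInf ((fun p : G.Walk u v =>
                (((p.support.dropLast).map fun x => (G.degree x : ℝ)).prod)
                  ^ ((G.dist u v : ℝ)⁻¹))
              '' {p : G.Walk u v | p.length = G.dist u v})) ^ (G.dist u v) :=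
  G.rowNormalized_pow_apply_le P hP (G.dist u v) u v

/-- Let `u ≠ v` with `v` reachable from `u`, `h* = dist u v`, and let `S` be the set
of shortest paths (walks of length `h*`) from `u` to `v`.  For a shortest path `p`
let `D^p_GM = (∏ₖ deg pₖ)^{1/h*}` be the geometric mean of the degrees of the first
`h*` vertices of `p`, and let `D*_GM` be the minimum of these over `S`.  Then the
`(u,v)` entry of `P ^ h*` is at most `|S| / (D*_GM)^{h*}`. -/
theorem rowNormalized_pow_dist_entry_le
    {V : Type*} [Fintype V] [DecidableEq V]
    (G : SimpleGraph V) [DecidableRel G.Adj]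
    (hdeg : ∀ w : V, 0 < G.degree w)
    (P : Matrix V V ℝ)
    (hP : ∀ x y : V, P x y = if G.Adj x y then ((G.degree x : ℝ))⁻¹ else 0)
    (u v : V) (hne : u ≠ v) (hr : G.Reachable u v) :
    (P ^ G.dist u v) u v
      ≤ ((G.finsetWalkLength (G.dist u v) u v).card : ℝ)
          / (sInf ((fun p : G.Walk u v =>
                (((p.support.dropLast).map fun x => (G.degree x : ℝ)).prod)
                  ^ ((G.dist u v : ℝ)⁻¹))
              '' {p : G.Walk u v | p.length = G.dist u v})) ^ (G.dist u v) :=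
  rowNormalized_pow_dist_entry_le_general G P hP u v
end
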